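/- arXiv:2106.03789 — 2 statements merged into one kernel-verified Lean document; each statement's English description precedes it below -/
import Mathlib

section
/- Let n ≥ 1, let λ_n = (n + √(n²+4))/2 and μ_n = (n + 2 + √(n²+4n))/2, let k_{l,n} = ⟨n, n, …, n⟩ (continuant of l copies of n), and let K_{l,n} be defined by K_{0,n} = 1, K_{1,n} = n+2, K_{j+1,n} = (n+2)K_{j,n} − K_{j−1,n}. Then for every l ≥ 0, k_{l,n} is the integer nearest to λ_n^{l+2}/(λ_n² + 1), and K_{l,n} = ⌊μ_n^{l+2}/(μ_n² − 1)⌋. -/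
/-!
Both sequences satisfy a two-term recurrence whose characteristic roots are `α` and `β`, with
`α` one of `λ_n`, `μ_n` and `β` its conjugate, so they have the Binet form
`u_l = (α^{l+1} - β^{l+1}) / (α - β)`. Since `αβ = ∓1`, the denominators `α² ± 1` equal
`α (α - β)`, hence `α^{l+2} / (α² ± 1) = u_l + β^{l+1} / (α - β)`. For `λ_n` the error has
`|β| < 1` and `α - β = √(n²+4) > 2`, so it is smaller than `1/2`; for `μ_n` it satisfies
`0 < β < 1` and `α - β = √(n²+4n) > 1`, so it lies in `[0, 1)`.
-/

/-- The continuant of a finite sequence of positive integers. -/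
def contnt : List ℕ → ℕ
  | [] => 1
  | [a] => a
  | a :: b :: l => a * contnt (b :: l) + contnt l

/-- `K_{l,n}`: `K_{0,n} = 1`, `K_{1,n} = n+2`, `K_{j+1,n} = (n+2)K_{j,n} − K_{j−1,n}`. -/
def Kseq (n : ℕ) : ℕ → ℤ
  | 0 => 1
  | 1 => (n : ℤ) + 2
  | (j + 2) => ((n : ℤ) + 2) * Kseq n (j + 1) - Kseq n j

theorem mul_sub_eq_pow_sub_pow_of_recurrence {R : Type*} [CommRing R] {α β : R} {u : ℕ → R}
    (h0 : u 0 = 1) (h1 : u 1 = α + β)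
    (hrec : ∀ m, u (m + 2) = (α + β) * u (m + 1) - α * β * u m) (m : ℕ) :
    u m * (α - β) = α ^ (m + 1) - β ^ (m + 1) := by
  induction m using Nat.twoStepInduction with
  | zero => simp [h0]
  | one => rw [h1]; ring
  | more m ih₀ ih₁ => rw [hrec]; linear_combination (α + β) * ih₁ - α * β * ih₀

theorem pow_div_mul_sub_eq_add {K : Type*} [Field K] {α β x : K} (hα : α ≠ 0) (hαβ : α - β ≠ 0)
    {m : ℕ} (hx : x * (α - β) = α ^ (m + 1) - β ^ (m + 1)) :
    α ^ (m + 2) / (α * (α - β)) = x + β ^ (m + 1) / (α - β) := by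
  rw [pow_succ, mul_comm α, mul_div_mul_right _ _ hα, div_eq_iff hαβ, add_mul,
    div_mul_cancel₀ _ hαβ, hx, sub_add_cancel]

theorem contnt_replicate_add_two (n m : ℕ) :
    contnt (List.replicate (m + 2) n) =
      n * contnt (List.replicate (m + 1) n) + contnt (List.replicate m n) :=
  rfl

theorem contnt_replicate_mul_sqrt (n m : ℕ) :
    (contnt (List.replicate m n) : ℝ) * √((n : ℝ) ^ 2 + 4) =
      ((n + √((n : ℝ) ^ 2 + 4)) / 2) ^ (m + 1) - ((n - √((n : ℝ) ^ 2 + 4)) / 2) ^ (m + 1) := by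
  have hs : √((n : ℝ) ^ 2 + 4) ^ 2 = (n : ℝ) ^ 2 + 4 := Real.sq_sqrt (by positivity)
  have h := mul_sub_eq_pow_sub_pow_of_recurrence (α := (n + √((n : ℝ) ^ 2 + 4)) / 2)
    (β := (n - √((n : ℝ) ^ 2 + 4)) / 2) (u := fun m ↦ (contnt (List.replicate m n) : ℝ))
    (by simp [contnt]) (by simp [contnt]; ring) (fun m ↦ ?_) m
  · rwa [show ∀ a b : ℝ, (a + b) / 2 - (a - b) / 2 = b by intros; ring] at h
  · simp only [contnt_replicate_add_two, Nat.cast_add, Nat.cast_mul]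
    linear_combination -(contnt (List.replicate m n) : ℝ) * hs / 4

theorem abs_contnt_replicate_sub_lt (n : ℕ) (hn : 1 ≤ n) (l : ℕ) :
    |(contnt (List.replicate l n) : ℝ) -
      ((n + √((n : ℝ) ^ 2 + 4)) / 2) ^ (l + 2) / (((n + √((n : ℝ) ^ 2 + 4)) / 2) ^ 2 + 1)| <
        1 / 2 := by
  set s := √((n : ℝ) ^ 2 + 4)
  have hN : (1 : ℝ) ≤ n := by exact_mod_cast hn
  have hs : s ^ 2 = (n : ℝ) ^ 2 + 4 := Real.sq_sqrt (by positivity)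
  have hs_pos : 0 < s := Real.sqrt_pos.mpr (by positivity)
  have hs_gt : 2 < s := by nlinarith
  have hβ : |((n : ℝ) - s) / 2| < 1 := abs_lt.mpr ⟨by nlinarith, by nlinarith⟩
  have hden : ((n + s) / 2) ^ 2 + 1 = (n + s) / 2 * ((n + s) / 2 - (n - s) / 2) := by
    linear_combination -hs / 4
  have hsub : (n + s) / 2 - (n - s) / 2 = s := by ring
  rw [hden, pow_div_mul_sub_eq_add (by positivity) (by linarith)
    (by rw [hsub]; exact contnt_replicate_mul_sqrt n l), hsub, sub_add_cancel_left, abs_neg,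
    abs_div, abs_pow, abs_of_pos hs_pos, div_lt_iff₀ hs_pos]
  calc |((n : ℝ) - s) / 2| ^ (l + 1) ≤ 1 := pow_le_one₀ (abs_nonneg _) hβ.le
    _ < 1 / 2 * s := by linarith

theorem Kseq_add_two (n m : ℕ) :
    Kseq n (m + 2) = ((n : ℤ) + 2) * Kseq n (m + 1) - Kseq n m :=
  rfl

theorem Kseq_mul_sqrt (n m : ℕ) :
    (Kseq n m : ℝ) * √((n : ℝ) ^ 2 + 4 * n) =
      ((n + 2 + √((n : ℝ) ^ 2 + 4 * n)) / 2) ^ (m + 1) -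
        ((n + 2 - √((n : ℝ) ^ 2 + 4 * n)) / 2) ^ (m + 1) := by
  have ht : √((n : ℝ) ^ 2 + 4 * n) ^ 2 = (n : ℝ) ^ 2 + 4 * n := Real.sq_sqrt (by positivity)
  have h := mul_sub_eq_pow_sub_pow_of_recurrence (α := (n + 2 + √((n : ℝ) ^ 2 + 4 * n)) / 2)
    (β := (n + 2 - √((n : ℝ) ^ 2 + 4 * n)) / 2) (u := fun m ↦ (Kseq n m : ℝ))
    (by simp [Kseq]) (by simp [Kseq]; ring) (fun m ↦ ?_) m
  · rwa [show ∀ a b : ℝ, (a + b) / 2 - (a - b) / 2 = b by intros; ring] at h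
  · simp only [Kseq_add_two, Int.cast_sub, Int.cast_mul, Int.cast_add, Int.cast_natCast,
      Int.cast_ofNat]
    linear_combination -(Kseq n m : ℝ) * ht / 4

theorem Kseq_eq_floor (n : ℕ) (hn : 1 ≤ n) (l : ℕ) :
    Kseq n l = ⌊((n + 2 + √((n : ℝ) ^ 2 + 4 * n)) / 2) ^ (l + 2) /
      (((n + 2 + √((n : ℝ) ^ 2 + 4 * n)) / 2) ^ 2 - 1)⌋ := by
  set t := √((n : ℝ) ^ 2 + 4 * n)
  have hN : (1 : ℝ) ≤ n := by exact_mod_cast hn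
  have ht : t ^ 2 = (n : ℝ) ^ 2 + 4 * n := Real.sq_sqrt (by positivity)
  have ht_pos : 0 < t := Real.sqrt_pos.mpr (by positivity)
  have ht_lt : t < n + 2 := by nlinarith
  have ht_gt : n < t := by nlinarith
  have hden :
      ((n + 2 + t) / 2) ^ 2 - 1 = (n + 2 + t) / 2 * ((n + 2 + t) / 2 - (n + 2 - t) / 2) := by
    linear_combination -ht / 4
  have hsub : (n + 2 + t) / 2 - (n + 2 - t) / 2 = t := by ring
  rw [hden, pow_div_mul_sub_eq_add (by positivity) (by linarith)
    (by rw [hsub]; exact Kseq_mul_sqrt n l), hsub, Int.floor_intCast_add, left_eq_add,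
    Int.floor_eq_zero_iff]
  have hβ : 0 ≤ (n + 2 - t) / 2 := by linarith
  refine ⟨by positivity, (div_lt_one ht_pos).mpr ?_⟩
  calc ((n + 2 - t) / 2) ^ (l + 1) ≤ 1 := pow_le_one₀ hβ (by linarith)
    _ < t := by nlinarith

/-- Lemma 7: `k_{l,n} = ⟨n^{l}⟩` is the integer nearest to
`λ_n^{l+2}/(λ_n²+1)` and `K_{l,n} = ⌊μ_n^{l+2}/(μ_n²−1)⌋`, where
`λ_n = (n+√(n²+4))/2` and `μ_n = (n+2+√(n²+4n))/2`. -/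
theorem stmt_11 (n : ℕ) (hn : 1 ≤ n) (l : ℕ) :
    let lam : ℝ := ((n : ℝ) + Real.sqrt ((n : ℝ) ^ 2 + 4)) / 2
    let mu : ℝ := ((n : ℝ) + 2 + Real.sqrt ((n : ℝ) ^ 2 + 4 * n)) / 2
    |(contnt (List.replicate l n) : ℝ) - lam ^ (l + 2) / (lam ^ 2 + 1)| < 1 / 2 ∧
    Kseq n l = ⌊mu ^ (l + 2) / (mu ^ 2 - 1)⌋ :=
  ⟨abs_contnt_replicate_sub_lt n hn l, Kseq_eq_floor n hn l⟩
end

section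
/- Let x_1,…,x_i (i ≥ 1), y_1,…,y_k (k ≥ 1), and z_1,…,z_j (j ≥ 1) be positive integers. Suppose ⟨y_1,…,y_k⟩ < ⟨x_1,…,x_i⟩ and [z_j; z_{j−1}, …, z_2, z_1] > (⟨y_2,…,y_k⟩ − ⟨x_2,…,x_i⟩) / (⟨x_1,…,x_i⟩ − ⟨y_1,…,y_k⟩) (as rational numbers). Then ⟨z_1,…,z_j, x_1,…,x_i⟩ > ⟨z_1,…,z_j, y_1,…,y_k⟩. -/
/-- The continued fraction `[a_0; a_1, …, a_t]` of a nonempty list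
(`0` for the empty list). -/
def cfVal : List ℕ → ℚ
  | [] => 0
  | [a] => (a : ℚ)
  | a :: b :: l => (a : ℚ) + 1 / cfVal (b :: l)


/-!
Expanding the continuant of a concatenation along the junction gives
`⟨z, x⟩ = ⟨z⟩ ⟨x⟩ + ⟨z_1,…,z_{j-1}⟩ ⟨x_2,…,x_i⟩`, and the reversed continued fraction of `z`
is `⟨z⟩ / ⟨z_1,…,z_{j-1}⟩`. Hence `⟨z, x⟩ - ⟨z, y⟩` is a positive multiple of
`[z_j; …, z_1] (⟨x⟩ - ⟨y⟩) - (⟨y_2,…,y_k⟩ - ⟨x_2,…,x_i⟩)`, which is positive by hypothesis.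
-/

/-- `⟨a_1,…,a_{t-1}⟩` for `l = [a_1,…,a_t]`, with value `0` at the empty list (the continuant of
length `-1`), so that the identities below need no nonemptiness hypothesis. -/
def contntInit : List ℕ → ℕ
  | [] => 0
  | a :: l => contnt (a :: l).dropLast

lemma contntInit_append_singleton (l : List ℕ) (a : ℕ) : contntInit (l ++ [a]) = contnt l := by
  cases l with
  | nil => rfl
  | cons b l => rw [List.cons_append, contntInit, ← List.cons_append, List.dropLast_concat]

lemma contntInit_cons_cons (a b : ℕ) (l : List ℕ) :
    contntInit (a :: b :: l) = a * contntInit (b :: l) + contntInit l := by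
  cases l <;> simp [contntInit, contnt, List.dropLast]

lemma contnt_pos {l : List ℕ} (hl : ∀ a ∈ l, 1 ≤ a) : 0 < contnt l := by
  induction l using contnt.induct with
  | case1 => simp [contnt]
  | case2 a => exact hl a (by simp)
  | case3 a b l ih _ =>
    have ha : 1 ≤ a := hl a (by simp)
    have hb : 0 < contnt (b :: l) := ih fun c hc => hl c (List.mem_cons_of_mem a hc)
    simp only [contnt]
    nlinarith

lemma contnt_append (z : List ℕ) {x : List ℕ} (hx : x ≠ []) :
    contnt (z ++ x) = contnt z * contnt x + contntInit z * contnt x.tail := by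
  induction z using contnt.induct with
  | case1 => simp [contnt, contntInit]
  | case2 a =>
    obtain ⟨c, x, rfl⟩ := List.exists_cons_of_ne_nil hx
    simp [contnt, contntInit]
  | case3 a b l ih₁ ih₂ =>
    have hcons : contnt (a :: b :: (l ++ x)) = a * contnt (b :: (l ++ x)) + contnt (l ++ x) :=
      rfl
    rw [List.cons_append, List.cons_append, hcons, ← List.cons_append, ih₁, ih₂,
      contntInit_cons_cons, contnt]
    ring

lemma cfVal_cons (a : ℕ) (l : List ℕ) : cfVal (a :: l) = a + 1 / cfVal l := by
  cases l <;> simp [cfVal]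

lemma cfVal_reverse {z : List ℕ} (hz : ∀ a ∈ z, 1 ≤ a) :
    cfVal z.reverse = (contnt z : ℚ) / contntInit z := by
  induction z using List.reverseRecOn with
  | nil => simp [cfVal, contnt, contntInit]
  | append_singleton z a ih =>
    have hzpos : (0 : ℚ) < contnt z :=
      mod_cast contnt_pos fun c hc => hz c (List.mem_append_left _ hc)
    rw [List.reverse_concat, cfVal_cons,
      ih fun c hc => hz c (List.mem_append_left _ hc), contnt_append z (List.cons_ne_nil a []),
      contntInit_append_singleton, one_div_div]
    field_simp
    push_cast [contnt, List.tail_cons]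
    ring

lemma mul_lt_mul_of_div_lt_div {α : Type*} [Field α] [LinearOrder α] [IsStrictOrderedRing α]
    {P Q N D : α} (hP : 0 < P) (hQ : 0 ≤ Q) (hD : 0 < D)
    (h : N / D < P / Q) : N * Q < P * D := by
  rcases hQ.eq_or_lt with rfl | hQ
  · simpa using mul_pos hP hD
  · exact (div_lt_div_iff₀ hD hQ).mp h

theorem stmt_15_general (x y z : List ℕ) (hxne : x ≠ []) (hyne : y ≠ [])
    (hz : ∀ a ∈ z, 1 ≤ a)
    (h1 : contnt y < contnt x)
    (h2 : cfVal z.reverse >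
      ((contnt y.tail : ℚ) - (contnt x.tail : ℚ)) /
        ((contnt x : ℚ) - (contnt y : ℚ))) :
    contnt (z ++ x) > contnt (z ++ y) := by
  rw [cfVal_reverse hz] at h2
  have hxy : (0 : ℚ) < contnt x - contnt y := sub_pos.mpr (mod_cast h1)
  have key := mul_lt_mul_of_div_lt_div (mod_cast contnt_pos hz) (Nat.cast_nonneg _) hxy h2
  rw [contnt_append z hxne, contnt_append z hyne]
  have hcast : ((contnt z * contnt y + contntInit z * contnt y.tail : ℕ) : ℚ) <
      contnt z * contnt x + contntInit z * contnt x.tail := by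
    push_cast
    linear_combination key
  exact_mod_cast hcast

/-- Lemma 13: if `⟨y⟩ < ⟨x⟩` and
`[z_j; z_{j−1},…,z_1] > (⟨y₂,…,y_k⟩ − ⟨x₂,…,x_i⟩)/(⟨x⟩ − ⟨y⟩)`, then
`⟨z, x⟩ > ⟨z, y⟩`. -/
theorem stmt_15 (x y z : List ℕ) (hxne : x ≠ []) (hyne : y ≠ []) (hzne : z ≠ [])
    (hx : ∀ a ∈ x, 1 ≤ a) (hy : ∀ a ∈ y, 1 ≤ a) (hz : ∀ a ∈ z, 1 ≤ a)
    (h1 : contnt y < contnt x)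
    (h2 : cfVal z.reverse >
      ((contnt y.tail : ℚ) - (contnt x.tail : ℚ)) /
        ((contnt x : ℚ) - (contnt y : ℚ))) :
    contnt (z ++ x) > contnt (z ++ y) :=
  stmt_15_general x y z hxne hyne hz h1 h2
end
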